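/- Let p, d, r be positive integers with r dividing (pd)^∞ (i.e., every prime factor of r divides pd). For any finitely supported complex sequence α(n), ∑_{γ mod pd, (γ,pd)=1} |∑_n α(n)·S(rγ, n; pdr)|² ≤ p·d·r² · ∑*_{y mod pd} |∑_{n : r|n} α(n)·e(y·(n/r)/(pd))|². -/

import Mathlib

open Finset
open scoped Classical

noncomputable def e (x : ℝ) : ℂ := Complex.exp (2 * Real.pi * Complex.I * x)

/-- The Kloosterman sum `S(a,b;c) = ∑*_{x mod c} e((a x + b x̄)/c)`. -/
noncomputable def kloosterman (c : ℕ) [NeZero c] (a b : ZMod c) : ℂ :=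
  ∑ x : ZMod c, if IsUnit x then e (((a * x + b * x⁻¹).val : ℝ) / (c : ℝ)) else 0


-- e of integer over M equals stdAddChar
lemma e_int (M : ℕ) [NeZero M] (j : ℤ) :
    e ((j : ℝ) / (M : ℝ)) = ZMod.stdAddChar ((j : ZMod M)) := by
  rw [ZMod.stdAddChar_coe, e]
  congr 1
  push_cast
  ring

lemma e_val (M : ℕ) [NeZero M] (x : ZMod M) :
    e ((x.val : ℝ) / (M : ℝ)) = ZMod.stdAddChar x := by
  have := e_int M (x.val : ℤ)
  simpa [ZMod.natCast_zmod_val] using this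

-- explicit exp formula
lemma stdAddChar_int (M : ℕ) [NeZero M] (j : ℤ) :
    ZMod.stdAddChar ((j : ZMod M)) = Complex.exp (2 * Real.pi * Complex.I * j / M) :=
  ZMod.stdAddChar_coe j

-- sum over ZMod = sum over range
lemma zmod_sum_range {β : Type*} [AddCommMonoid β] (M : ℕ) [NeZero M] (f : ZMod M → β) :
    ∑ x : ZMod M, f x = ∑ k ∈ Finset.range M, f (k : ZMod M) := by
  refine Finset.sum_nbij' (fun x => x.val) (fun k => (k : ZMod M)) ?_ ?_ ?_ ?_ ?_
  · intro x _; exact Finset.mem_range.mpr (ZMod.val_lt x)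
  · intro k _; exact Finset.mem_univ _
  · intro x _; exact ZMod.natCast_zmod_val x
  · intro k hk; exact ZMod.val_natCast_of_lt (Finset.mem_range.mp hk)
  · intro x _; rw [ZMod.natCast_zmod_val]

-- involution sum over units
lemma sum_units_inv {β : Type*} [AddCommMonoid β] (M : ℕ) [NeZero M] (f g : ZMod M → β)
    (h : ∀ x : ZMod M, IsUnit x → g x = f x⁻¹) :
    ∑ x : ZMod M, (if IsUnit x then f x else 0) = ∑ x : ZMod M, (if IsUnit x then g x else 0) := by
  have key : ∀ x : ZMod M, IsUnit x → (IsUnit x⁻¹ ∧ (x⁻¹)⁻¹ = x) := by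
    intro x hx
    have h1 : x * x⁻¹ = 1 := ZMod.mul_inv_of_unit x hx
    have h2 : IsUnit x⁻¹ := IsUnit.of_mul_eq_one _ (by rwa [mul_comm])
    exact ⟨h2, ZMod.inv_eq_of_mul_eq_one M _ _ (by rwa [mul_comm])⟩
  set φ : ZMod M → ZMod M := fun x => if IsUnit x then x⁻¹ else x with hφ
  have hinv : Function.Involutive φ := by
    intro x
    by_cases hx : IsUnit x
    · simp only [hφ, if_pos hx, if_pos (key x hx).1, (key x hx).2]
    · simp only [hφ, if_neg hx, if_neg hx]
  refine Finset.sum_nbij' φ φ (fun _ _ => Finset.mem_univ _) (fun _ _ => Finset.mem_univ _)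
    (fun x _ => hinv x) (fun x _ => hinv x) ?_
  intro x _
  by_cases hx : IsUnit x
  · simp only [hφ, if_pos hx, h _ (key x hx).1, (key x hx).2, if_pos (key x hx).1]
  · simp only [hφ, if_neg hx]

-- coprimality transfer
lemma coprime_mul_of_rad (N r a : ℕ) (hrad : ∀ q : ℕ, q.Prime → q ∣ r → q ∣ N) :
    Nat.Coprime a (N * r) ↔ Nat.Coprime a N := by
  constructor
  · exact fun h => Nat.Coprime.coprime_dvd_right (dvd_mul_right N r) h
  · intro h
    refine Nat.Coprime.mul_right h ?_
    by_contra hc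
    obtain ⟨q, hq, hqa, hqr⟩ := Nat.Prime.not_coprime_iff_dvd.mp hc
    have : q ∣ N := hrad q hq hqr
    have : q ∣ Nat.gcd a N := Nat.dvd_gcd hqa this
    rw [h] at this
    have := Nat.eq_one_of_dvd_one this
    exact hq.one_lt.ne' this

-- unit correspondence
lemma isUnit_iff_cast (N r : ℕ) [NeZero N] [NeZero (N * r)]
    (hrad : ∀ q : ℕ, q.Prime → q ∣ r → q ∣ N) (x : ZMod (N * r)) :
    IsUnit x ↔ IsUnit ((x.val : ZMod N)) := by
  conv_lhs => rw [← ZMod.natCast_zmod_val x]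
  rw [ZMod.isUnit_iff_coprime, ZMod.isUnit_iff_coprime]
  exact coprime_mul_of_rad N r x.val hrad

-- descent: stdAddChar over N*r of r*z equals stdAddChar over N of z's reduction
lemma stdAddChar_r_mul (N r : ℕ) (hN : N ≠ 0) (hr : r ≠ 0) (z : ZMod (N * r)) :
    haveI : NeZero N := ⟨hN⟩
    haveI : NeZero (N * r) := ⟨by positivity⟩
    ZMod.stdAddChar ((r : ZMod (N * r)) * z) = ZMod.stdAddChar ((z.val : ZMod N)) := by
  haveI : NeZero N := ⟨hN⟩
  haveI : NeZero (N * r) := ⟨by simp [hN, hr]⟩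
  have h1 : (r : ZMod (N * r)) * z = (((r * z.val : ℕ) : ℤ) : ZMod (N * r)) := by
    push_cast [ZMod.natCast_zmod_val]; ring
  have h2 : ((z.val : ZMod N)) = (((z.val : ℕ) : ℤ) : ZMod N) := by push_cast; rfl
  rw [h1, h2, ZMod.stdAddChar_coe, ZMod.stdAddChar_coe]
  congr 1
  have hNc : (N : ℂ) ≠ 0 := Nat.cast_ne_zero.mpr hN
  have hrc : (r : ℂ) ≠ 0 := Nat.cast_ne_zero.mpr hr
  push_cast
  field_simp

-- conj of stdAddChar
lemma conj_stdAddChar (M : ℕ) [NeZero M] (x : ZMod M) :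
    (starRingEnd ℂ) (ZMod.stdAddChar x) = ZMod.stdAddChar (-x) := by
  have h1 : ZMod.stdAddChar x * ZMod.stdAddChar (-x) = 1 := by
    rw [← AddChar.map_add_eq_mul]; simp
  have hnorm : Complex.normSq (ZMod.stdAddChar x) = 1 := by
    rw [ZMod.stdAddChar_apply]
    rw [Complex.normSq_eq_norm_sq, Circle.norm_coe, one_pow]
  have h2 : (starRingEnd ℂ) (ZMod.stdAddChar x) * ZMod.stdAddChar x = 1 := by
    rw [mul_comm, Complex.mul_conj, hnorm]; simp
  have hne : ZMod.stdAddChar x ≠ 0 := fun h => by simp [h] at h2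
  apply mul_right_cancel₀ hne
  rw [h2, mul_comm, ← AddChar.map_add_eq_mul]
  simp

-- orthogonality
lemma char_orthogonality (M : ℕ) [NeZero M] (b : ZMod M) :
    ∑ x : ZMod M, ZMod.stdAddChar (x * b) = if b = 0 then (M : ℂ) else 0 := by
  rw [AddChar.sum_mulShift b (ZMod.isPrimitive_stdAddChar M)]
  simp [ZMod.card]

-- range (N*r) decomposition
lemma range_mul_decomp {β : Type*} [AddCommMonoid β] (N r : ℕ) (hN : 0 < N) (f : ℕ → β) :
    ∑ k ∈ Finset.range (N * r), f k
      = ∑ v ∈ Finset.range N, ∑ t ∈ Finset.range r, f (v + N * t) := by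
  have key : ∑ k ∈ Finset.range (N * r), f k
      = ∑ p ∈ Finset.range N ×ˢ Finset.range r, f (p.1 + N * p.2) := by
    refine Finset.sum_nbij' (fun k => (k % N, k / N)) (fun p => p.1 + N * p.2) ?_ ?_ ?_ ?_ ?_
    · intro k hk
      rw [Finset.mem_range] at hk
      refine Finset.mem_product.mpr ⟨Finset.mem_range.mpr (Nat.mod_lt _ hN), Finset.mem_range.mpr ?_⟩
      rw [Nat.div_lt_iff_lt_mul hN, mul_comm r N]
      exact hk
    · intro p hp
      rw [Finset.mem_product, Finset.mem_range, Finset.mem_range] at hp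
      rw [Finset.mem_range]
      calc p.1 + N * p.2 < N + N * p.2 := by omega
      _ = N * (p.2 + 1) := by ring
      _ ≤ N * r := Nat.mul_le_mul_left N (by omega)
    · intro k _; exact Nat.mod_add_div k N
    · intro p hp
      rw [Finset.mem_product, Finset.mem_range, Finset.mem_range] at hp
      ext
      · simp [Nat.add_mul_mod_self_left, Nat.mod_eq_of_lt hp.1]
      · simp [Nat.add_mul_div_left _ _ hN, Nat.div_eq_of_lt hp.1]
    · intro k _; rw [Nat.mod_add_div k N]
  rw [key, Finset.sum_product]

-- the t-sum
lemma t_sum (r : ℕ) (hr : r ≠ 0) (n : ℤ) :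
    haveI : NeZero r := ⟨hr⟩
    ∑ t ∈ Finset.range r, Complex.exp (2 * Real.pi * Complex.I * (n * t) / r)
      = if (r : ℤ) ∣ n then (r : ℂ) else 0 := by
  haveI : NeZero r := ⟨hr⟩
  have h1 : ∀ t ∈ Finset.range r, Complex.exp (2 * Real.pi * Complex.I * (n * t) / r)
      = ZMod.stdAddChar (((t : ℕ) : ZMod r) * (n : ZMod r)) := by
    intro t _
    have : (((t : ℕ) : ZMod r) * (n : ZMod r)) = (((n * t : ℤ)) : ZMod r) := by push_cast; ring
    rw [this, ZMod.stdAddChar_coe]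
    congr 1
    push_cast
    ring
  rw [Finset.sum_congr rfl h1]
  have h2 := zmod_sum_range r (fun x : ZMod r => ZMod.stdAddChar (x * (n : ZMod r)))
  rw [← h2, AddChar.sum_mulShift _ (ZMod.isPrimitive_stdAddChar r)]
  by_cases hdvd : (r : ℤ) ∣ n
  · have h0 : (n : ZMod r) = 0 := (ZMod.intCast_zmod_eq_zero_iff_dvd n r).mpr hdvd
    simp [h0, ZMod.card, hdvd]
  · have h0 : (n : ZMod r) ≠ 0 := fun h => hdvd ((ZMod.intCast_zmod_eq_zero_iff_dvd n r).mp h)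
    simp [h0, hdvd]


lemma kloosterman_factor (N r : ℕ) [NeZero N] [NeZero (N * r)]
    (hrad : ∀ q : ℕ, q.Prime → q ∣ r → q ∣ N)
    (γ : ZMod N) (n : ℤ) :
    kloosterman (N * r) ((r : ZMod (N * r)) * ((γ.val : ℕ) : ZMod (N * r))) ((n : ℤ) : ZMod (N * r))
      = (if (r : ℤ) ∣ n then (r : ℂ) else 0) *
        ∑ v : ZMod N, (if IsUnit v then
          ZMod.stdAddChar (γ * v⁻¹) * ZMod.stdAddChar (((n / r : ℤ) : ZMod N) * v) else 0) := by
  have hN : N ≠ 0 := NeZero.ne N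
  have hr : r ≠ 0 := by
    intro h
    exact (NeZero.ne (N * r)) (by simp [h])
  have hNc : (N : ℂ) ≠ 0 := Nat.cast_ne_zero.mpr hN
  have hrc : (r : ℂ) ≠ 0 := Nat.cast_ne_zero.mpr hr
  set π : ZMod (N * r) →+* ZMod N := ZMod.castHom (dvd_mul_right N r) (ZMod N) with hπ
  have hπval : ∀ z : ZMod (N * r), ((z.val : ZMod N)) = π z := fun z => by
    rw [ZMod.natCast_val, hπ, ZMod.castHom_apply]
  have hπγ : π ((γ.val : ℕ) : ZMod (N * r)) = γ := by
    rw [map_natCast, ZMod.natCast_zmod_val]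
  have hπinv : ∀ x : ZMod (N * r), IsUnit x → π x⁻¹ = (π x)⁻¹ := by
    intro x hx
    refine (ZMod.inv_eq_of_mul_eq_one N _ _ ?_).symm
    rw [← map_mul, ZMod.mul_inv_of_unit x hx, map_one]
  have hunit : ∀ x : ZMod (N * r), IsUnit x ↔ IsUnit (π x) := by
    intro x
    rw [← hπval]
    exact isUnit_iff_cast N r hrad x
  -- Step 1: rewrite Kloosterman sum via stdAddChar and invert the summation variable
  have step1 : kloosterman (N * r) ((r : ZMod (N * r)) * ((γ.val : ℕ) : ZMod (N * r)))
        ((n : ℤ) : ZMod (N * r))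
      = ∑ x : ZMod (N * r), (if IsUnit (π x) then
          ZMod.stdAddChar (γ * (π x)⁻¹) * ZMod.stdAddChar (((n : ℤ) : ZMod (N * r)) * x)
          else 0) := by
    rw [kloosterman]
    simp_rw [e_val]
    rw [sum_units_inv (N * r)
      (fun x => ZMod.stdAddChar ((r : ZMod (N * r)) * ((γ.val : ℕ) : ZMod (N * r)) * x
        + ((n : ℤ) : ZMod (N * r)) * x⁻¹))
      (fun x => ZMod.stdAddChar ((r : ZMod (N * r)) * ((γ.val : ℕ) : ZMod (N * r)) * x⁻¹
        + ((n : ℤ) : ZMod (N * r)) * x))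
      (by
        intro x hx
        have hxinv : x⁻¹ * x = 1 := ZMod.inv_mul_of_unit x hx
        simp only [ZMod.inv_eq_of_mul_eq_one (N * r) x⁻¹ x hxinv])]
    refine Finset.sum_congr rfl ?_
    intro x _
    by_cases hx : IsUnit x
    · rw [if_pos hx, if_pos ((hunit x).mp hx)]
      rw [AddChar.map_add_eq_mul]
      congr 1
      rw [mul_assoc, stdAddChar_r_mul N r hN hr, hπval, map_mul, hπγ, hπinv x hx]
    · rw [if_neg hx, if_neg (fun h => hx ((hunit x).mpr h))]
  -- Step 2: explicit exponential for the b-part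
  have hbmul : ∀ k : ℕ, ZMod.stdAddChar (((n : ℤ) : ZMod (N * r)) * (k : ZMod (N * r)))
      = Complex.exp (2 * Real.pi * Complex.I * (n * k) / (N * r : ℕ)) := by
    intro k
    have h : ((n : ℤ) : ZMod (N * r)) * (k : ZMod (N * r)) = ((n * k : ℤ) : ZMod (N * r)) := by
      push_cast; ring
    rw [h, ZMod.stdAddChar_coe]
    congr 1
    push_cast
    ring
  have hπnat : ∀ v t : ℕ, π ((v + N * t : ℕ) : ZMod (N * r)) = (v : ZMod N) := by
    intro v t
    rw [map_natCast]
    push_cast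
    simp
  rw [step1, zmod_sum_range (N * r), range_mul_decomp N r (Nat.pos_of_ne_zero hN)]
  -- Step 3: compute inner t-sums
  have inner : ∀ v : ℕ, ∑ t ∈ Finset.range r,
        (if IsUnit (π ((v + N * t : ℕ) : ZMod (N * r))) then
          ZMod.stdAddChar (γ * (π ((v + N * t : ℕ) : ZMod (N * r)))⁻¹) *
            ZMod.stdAddChar (((n : ℤ) : ZMod (N * r)) * ((v + N * t : ℕ) : ZMod (N * r)))
          else 0)
      = if IsUnit ((v : ZMod N)) then
          ZMod.stdAddChar (γ * ((v : ZMod N))⁻¹) *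
            (Complex.exp (2 * Real.pi * Complex.I * (n * v) / (N * r : ℕ)) *
              (if (r : ℤ) ∣ n then (r : ℂ) else 0))
        else 0 := by
    intro v
    have hsplit : ∀ t ∈ Finset.range r,
        Complex.exp (2 * Real.pi * Complex.I * (n * (v + N * t : ℕ)) / (N * r : ℕ))
        = Complex.exp (2 * Real.pi * Complex.I * (n * v) / (N * r : ℕ)) *
            Complex.exp (2 * Real.pi * Complex.I * (n * t) / r) := by
      intro t _
      rw [← Complex.exp_add]
      congr 1
      push_cast
      field_simp
    simp_rw [hπnat v, hbmul]
    by_cases hu : IsUnit ((v : ZMod N))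
    · simp only [if_pos hu]
      rw [← Finset.mul_sum]
      congr 1
      rw [Finset.sum_congr rfl hsplit, ← Finset.mul_sum, t_sum r hr n]
    · simp only [if_neg hu, Finset.sum_const_zero]
  rw [Finset.sum_congr rfl (fun v _ => inner v)]
  -- Step 4: case split on divisibility
  by_cases hdvd : (r : ℤ) ∣ n
  · simp only [if_pos hdvd]
    have hexp : ∀ v : ℕ, Complex.exp (2 * Real.pi * Complex.I * (n * v) / (N * r : ℕ))
        = ZMod.stdAddChar (((n / r : ℤ) : ZMod N) * ((v : ℕ) : ZMod N)) := by
      intro v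
      have h : ((n / r : ℤ) : ZMod N) * ((v : ℕ) : ZMod N)
          = (((n / r) * v : ℤ) : ZMod N) := by push_cast; ring
      rw [h, ZMod.stdAddChar_coe]
      congr 1
      obtain ⟨m, hm⟩ := hdvd
      rw [hm, Int.mul_ediv_cancel_left _ (by exact_mod_cast hr)]
      push_cast
      field_simp
    rw [zmod_sum_range N (fun v : ZMod N => if IsUnit v then
      ZMod.stdAddChar (γ * v⁻¹) * ZMod.stdAddChar (((n / r : ℤ) : ZMod N) * v) else 0)]
    rw [Finset.mul_sum]
    refine Finset.sum_congr rfl ?_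
    intro v _
    split_ifs with hu
    · rw [hexp v]
      ring
    · simp
  · simp [hdvd]

lemma parseval (M : ℕ) [NeZero M] (g : ZMod M → ℂ) :
    ∑ γ : ZMod M, ‖∑ u : ZMod M, ZMod.stdAddChar (γ * u) * g u‖ ^ 2
      = (M : ℝ) * ∑ u : ZMod M, ‖g u‖ ^ 2 := by
  set S : ZMod M → ℂ := fun γ => ∑ u : ZMod M, ZMod.stdAddChar (γ * u) * g u with hS
  have expand : ∀ γ : ZMod M, (starRingEnd ℂ) (S γ) * S γ
      = ∑ u : ZMod M, ∑ w : ZMod M,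
          ((starRingEnd ℂ) (g u) * g w) * ZMod.stdAddChar (γ * (w - u)) := by
    intro γ
    rw [hS]
    simp only
    rw [map_sum, Finset.sum_mul_sum]
    refine Finset.sum_congr rfl fun u _ => Finset.sum_congr rfl fun w _ => ?_
    rw [map_mul, conj_stdAddChar]
    rw [show ZMod.stdAddChar (γ * (w - u))
        = ZMod.stdAddChar (-(γ * u)) * ZMod.stdAddChar (γ * w) from by
      rw [← AddChar.map_add_eq_mul]; congr 1; ring]
    ring
  have key : ∑ γ : ZMod M, (starRingEnd ℂ) (S γ) * S γ
      = (M : ℂ) * ∑ u : ZMod M, (starRingEnd ℂ) (g u) * g u := by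
    rw [Finset.sum_congr rfl fun γ _ => expand γ]
    rw [Finset.sum_comm]
    have inner1 : ∀ u : ZMod M, ∑ γ : ZMod M, ∑ w : ZMod M,
        ((starRingEnd ℂ) (g u) * g w) * ZMod.stdAddChar (γ * (w - u))
        = ((starRingEnd ℂ) (g u) * g u) * M := by
      intro u
      rw [Finset.sum_comm]
      have h1 : ∀ w : ZMod M, ∑ γ : ZMod M,
          ((starRingEnd ℂ) (g u) * g w) * ZMod.stdAddChar (γ * (w - u))
          = ((starRingEnd ℂ) (g u) * g w) * (if w - u = 0 then (M : ℂ) else 0) := by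
        intro w
        rw [← Finset.mul_sum, char_orthogonality]
      rw [Finset.sum_congr rfl fun w _ => h1 w]
      rw [Finset.sum_eq_single u]
      · simp
      · intro w _ hw
        simp [sub_eq_zero, hw]
      · intro h
        exact absurd (Finset.mem_univ u) h
    rw [Finset.sum_congr rfl fun u _ => inner1 u, ← Finset.sum_mul]
    ring
  have cast1 : ∀ z : ℂ, ((‖z‖ ^ 2 : ℝ) : ℂ) = (starRingEnd ℂ) z * z := by
    intro z
    rw [mul_comm, Complex.mul_conj, Complex.normSq_eq_norm_sq]
  apply Complex.ofReal_injective
  push_cast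
  calc ∑ γ : ZMod M, (‖S γ‖ : ℂ) ^ 2 = ∑ γ : ZMod M, (starRingEnd ℂ) (S γ) * S γ := by
        refine Finset.sum_congr rfl fun γ _ => ?_
        rw [← cast1]; push_cast; ring
    _ = (M : ℂ) * ∑ u : ZMod M, (starRingEnd ℂ) (g u) * g u := key
    _ = (M : ℂ) * ∑ u : ZMod M, (‖g u‖ : ℂ) ^ 2 := by
        congr 1
        refine Finset.sum_congr rfl fun u _ => ?_
        rw [← cast1]; push_cast; ring

set_option maxHeartbeats 1000000 in
theorem stmt9 (p d r : ℕ) (hp : 0 < p) (hd : 0 < d) (hr : 0 < r)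
    (hrad : ∀ q : ℕ, q.Prime → q ∣ r → q ∣ p * d)
    (F : Finset ℤ) (α : ℤ → ℂ) :
    letI : NeZero (p * d) := ⟨by positivity⟩
    letI : NeZero (p * d * r) := ⟨by positivity⟩
    (∑ γ : ZMod (p * d), if IsUnit γ then
        ‖∑ n ∈ F, α n *
            kloosterman (p * d * r) ((r : ZMod (p * d * r)) * ((γ.val : ℕ) : ZMod (p * d * r)))
              ((n : ℤ) : ZMod (p * d * r))‖ ^ 2 else 0)
    ≤ (p * d * r ^ 2 : ℝ) * ∑ y : ZMod (p * d), if IsUnit y then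
        ‖∑ n ∈ F.filter (fun n => (r : ℤ) ∣ n),
            α n * e (((y.val : ℤ) * (n / r) : ℤ) / ((p * d : ℕ) : ℝ))‖ ^ 2 else 0 := by
  haveI : NeZero (p * d) := ⟨by positivity⟩
  haveI : NeZero (p * d * r) := ⟨by positivity⟩
  have hrne : r ≠ 0 := hr.ne'
  -- definitions
  set T : ZMod (p * d) → ℂ := fun y => ∑ n ∈ F.filter (fun n => (r : ℤ) ∣ n),
    α n * ZMod.stdAddChar (((n / r : ℤ) : ZMod (p * d)) * y) with hT
  set g : ZMod (p * d) → ℂ := fun u => if IsUnit u then T u⁻¹ else 0 with hg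
  set S : ZMod (p * d) → ℂ := fun γ => ∑ u : ZMod (p * d), ZMod.stdAddChar (γ * u) * g u with hS
  -- double-inverse helper
  have dinv : ∀ u : ZMod (p * d), IsUnit u → (u⁻¹⁻¹ = u ∧ IsUnit u⁻¹) := by
    intro u hu
    have h1 : u⁻¹ * u = 1 := ZMod.inv_mul_of_unit u hu
    exact ⟨ZMod.inv_eq_of_mul_eq_one _ _ _ h1,
      IsUnit.of_mul_eq_one _ h1⟩
  -- Step A
  have stepA : ∀ γ : ZMod (p * d), IsUnit γ →
      (∑ n ∈ F, α n *
        kloosterman (p * d * r) ((r : ZMod (p * d * r)) * ((γ.val : ℕ) : ZMod (p * d * r)))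
          ((n : ℤ) : ZMod (p * d * r))) = (r : ℂ) * S γ := by
    intro γ hγ
    have h1 : ∀ n ∈ F, α n *
        kloosterman (p * d * r) ((r : ZMod (p * d * r)) * ((γ.val : ℕ) : ZMod (p * d * r)))
          ((n : ℤ) : ZMod (p * d * r))
        = if (r : ℤ) ∣ n then (r : ℂ) * (α n * ∑ v : ZMod (p * d), (if IsUnit v then
            ZMod.stdAddChar (γ * v⁻¹) * ZMod.stdAddChar (((n / r : ℤ) : ZMod (p * d)) * v)
            else 0)) else 0 := by
      intro n _
      rw [kloosterman_factor (p * d) r hrad γ n]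
      split_ifs with hdvd
      · ring
      · ring
    rw [Finset.sum_congr rfl h1, ← Finset.sum_filter, ← Finset.mul_sum]
    congr 1
    -- swap the n-sum and v-sum
    have h2 : ∀ n ∈ F.filter (fun n => (r : ℤ) ∣ n),
        α n * ∑ v : ZMod (p * d), (if IsUnit v then
          ZMod.stdAddChar (γ * v⁻¹) * ZMod.stdAddChar (((n / r : ℤ) : ZMod (p * d)) * v) else 0)
        = ∑ v : ZMod (p * d), (if IsUnit v then
          ZMod.stdAddChar (γ * v⁻¹) *
            (α n * ZMod.stdAddChar (((n / r : ℤ) : ZMod (p * d)) * v)) else 0) := by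
      intro n _
      rw [Finset.mul_sum]
      refine Finset.sum_congr rfl fun v _ => ?_
      split_ifs
      · ring
      · ring
    rw [Finset.sum_congr rfl h2, Finset.sum_comm]
    have h3 : ∀ v : ZMod (p * d),
        (∑ n ∈ F.filter (fun n => (r : ℤ) ∣ n), (if IsUnit v then
          ZMod.stdAddChar (γ * v⁻¹) *
            (α n * ZMod.stdAddChar (((n / r : ℤ) : ZMod (p * d)) * v)) else 0))
        = if IsUnit v then ZMod.stdAddChar (γ * v⁻¹) * T v else 0 := by
      intro v
      split_ifs with hv
      · rw [hT]; simp only; rw [Finset.mul_sum]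
      · simp
    rw [Finset.sum_congr rfl fun v _ => h3 v]
    rw [sum_units_inv (p * d) (fun v => ZMod.stdAddChar (γ * v⁻¹) * T v)
      (fun u => ZMod.stdAddChar (γ * u) * T u⁻¹)
      (by
        intro u hu
        simp only [(dinv u hu).1])]
    rw [hS]
    simp only
    refine Finset.sum_congr rfl fun u _ => ?_
    rw [hg]
    simp only
    split_ifs with hu
    · ring
    · ring
  -- Step B : rewrite LHS
  have stepB : (∑ γ : ZMod (p * d), if IsUnit γ then
      ‖∑ n ∈ F, α n *
          kloosterman (p * d * r) ((r : ZMod (p * d * r)) * ((γ.val : ℕ) : ZMod (p * d * r)))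
            ((n : ℤ) : ZMod (p * d * r))‖ ^ 2 else 0)
      = ∑ γ : ZMod (p * d), (if IsUnit γ then ((r : ℝ) ^ 2) * ‖S γ‖ ^ 2 else 0) := by
    refine Finset.sum_congr rfl fun γ _ => ?_
    split_ifs with hγ
    · rw [stepA γ hγ, norm_mul, mul_pow]
      norm_num
    · rfl
  rw [stepB]
  -- bound by full sum and apply Parseval
  have stepC : ∑ γ : ZMod (p * d), (if IsUnit γ then ((r : ℝ) ^ 2) * ‖S γ‖ ^ 2 else 0)
      ≤ ((r : ℝ) ^ 2) * ∑ γ : ZMod (p * d), ‖S γ‖ ^ 2 := by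
    rw [Finset.mul_sum]
    refine Finset.sum_le_sum fun γ _ => ?_
    split_ifs with hγ
    · exact le_refl _
    · positivity
  refine le_trans stepC ?_
  rw [hS]
  rw [parseval (p * d) g]
  -- rewrite RHS sum
  have hg2 : ∑ u : ZMod (p * d), ‖g u‖ ^ 2
      = ∑ y : ZMod (p * d), (if IsUnit y then ‖T y‖ ^ 2 else 0) := by
    have h4 : ∀ u : ZMod (p * d), ‖g u‖ ^ 2 = if IsUnit u then ‖T u⁻¹‖ ^ 2 else 0 := by
      intro u
      rw [hg]
      simp only
      split_ifs
      · rfl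
      · simp
    rw [Finset.sum_congr rfl fun u _ => h4 u]
    exact sum_units_inv (p * d) (fun u => ‖T u⁻¹‖ ^ 2) (fun y => ‖T y‖ ^ 2)
      (by intro y hy; simp only [(dinv y hy).1])
  rw [hg2]
  have hTmatch : ∀ y : ZMod (p * d), T y
      = ∑ n ∈ F.filter (fun n => (r : ℤ) ∣ n),
          α n * e (((y.val : ℤ) * (n / r) : ℤ) / ((p * d : ℕ) : ℝ)) := by
    intro y
    rw [hT]
    refine Finset.sum_congr rfl fun n _ => ?_
    congr 1
    rw [e_int (p * d) ((y.val : ℤ) * (n / r))]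
    congr 1
    push_cast [ZMod.natCast_zmod_val]
    ring
  have hsum : ∑ y : ZMod (p * d), (if IsUnit y then ‖T y‖ ^ 2 else 0)
      = ∑ y : ZMod (p * d), (if IsUnit y then
        ‖∑ n ∈ F.filter (fun n => (r : ℤ) ∣ n),
            α n * e (((y.val : ℤ) * (n / r) : ℤ) / ((p * d : ℕ) : ℝ))‖ ^ 2 else 0) := by
    refine Finset.sum_congr rfl fun y _ => ?_
    rw [hTmatch y]
  rw [hsum]
  apply le_of_eq
  push_cast
  ring
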